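/- Let p ∈ [1, ∞), U ⊆ R^d a bounded measurable set, and w: U × U → C measurable and bounded (extended by zero outside U × U). Then for all f, g ∈ L^p(R^d, C), the weighted cross-correlation f ⋆_w g lies in L^p(R^d, C). -/

import Mathlib

open MeasureTheory Complex
open scoped ENNReal

/-- Weighted cross-correlation `(f ⋆_w g)(x) = ∫ f*(y) g(x+y) w(x+y, y) dy`. -/
noncomputable def wcc {d : ℕ} (f g : EuclideanSpace ℝ (Fin d) → ℂ)
    (w : EuclideanSpace ℝ (Fin d) → EuclideanSpace ℝ (Fin d) → ℂ)
    (x : EuclideanSpace ℝ (Fin d)) : ℂ :=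
  ∫ y, (starRingEnd ℂ) (f y) * g (x + y) * w (x + y) y

/-!
Since `w x y = 0` for `y ∉ U`, one may replace `f` by `U.indicator f`, which is integrable because
`U` has finite measure. Pointwise `|f ⋆_w g| ≤ C · (|f| ⋆ |g|)`, and the correlation of an `L¹`
function with an `Lᵖ` function is in `Lᵖ` (Young's inequality `‖φ ⋆ γ‖_p ≤ ‖φ‖₁ ‖γ‖_p`): by Hölder,
`(∫ φ h)^p ≤ (∫ φ)^(p-1) ∫ φ h^p`, and integrating in `x` with `h = γ(x + ·)` gives the claim by
Tonelli and translation invariance.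
-/

theorem ENNReal.lintegral_mul_rpow_le {α : Type*} [MeasurableSpace α] {μ : Measure α}
    {q : ℝ} (hq : 1 ≤ q) {φ h : α → ℝ≥0∞} (hφ : AEMeasurable φ μ) (hh : AEMeasurable h μ) :
    (∫⁻ a, φ a * h a ∂μ) ^ q ≤ (∫⁻ a, φ a ∂μ) ^ (q - 1) * ∫⁻ a, φ a * h a ^ q ∂μ := by
  have hq0 : 0 < q := one_pos.trans_le hq
  have hr : 0 ≤ 1 - 1 / q := by rw [sub_nonneg, div_le_one hq0]; exact hq
  have hsplit : ∀ a, φ a ^ (1 - 1 / q) * (φ a * h a ^ q) ^ (1 / q) = φ a * h a := fun a => by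
    rw [ENNReal.mul_rpow_of_nonneg _ _ (by positivity), ← mul_assoc,
      ← ENNReal.rpow_add_of_nonneg _ _ hr (by positivity), sub_add_cancel, ENNReal.rpow_one,
      ← ENNReal.rpow_mul, mul_one_div_cancel hq0.ne', ENNReal.rpow_one]
  calc (∫⁻ a, φ a * h a ∂μ) ^ q
      = (∫⁻ a, φ a ^ (1 - 1 / q) * (φ a * h a ^ q) ^ (1 / q) ∂μ) ^ q := by simp only [hsplit]
    _ ≤ ((∫⁻ a, φ a ∂μ) ^ (1 - 1 / q) * (∫⁻ a, φ a * h a ^ q ∂μ) ^ (1 / q)) ^ q :=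
        ENNReal.rpow_le_rpow (ENNReal.lintegral_mul_norm_pow_le hφ (hφ.mul (hh.pow_const q)) hr
          (by positivity) (sub_add_cancel _ _)) hq0.le
    _ = (∫⁻ a, φ a ∂μ) ^ (q - 1) * ∫⁻ a, φ a * h a ^ q ∂μ := by
        rw [ENNReal.mul_rpow_of_nonneg _ _ hq0.le, ← ENNReal.rpow_mul, ← ENNReal.rpow_mul,
          one_div_mul_cancel hq0.ne', ENNReal.rpow_one, sub_mul, one_mul,
          one_div_mul_cancel hq0.ne']

section Young

variable {G : Type*} [MeasurableSpace G] [AddGroup G] [MeasurableAdd₂ G]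
  {μ : Measure G} [SFinite μ] [μ.IsAddRightInvariant]

theorem lintegral_rpow_lintegral_mul_comp_add_le {q : ℝ} (hq : 1 ≤ q) {φ γ : G → ℝ≥0∞}
    (hφ : Measurable φ) (hγ : Measurable γ) :
    ∫⁻ x, (∫⁻ y, φ y * γ (x + y) ∂μ) ^ q ∂μ ≤ (∫⁻ y, φ y ∂μ) ^ q * ∫⁻ z, γ z ^ q ∂μ := by
  set A := ∫⁻ y, φ y ∂μ
  have hkernel : Measurable fun x : G × G => φ x.2 * γ (x.1 + x.2) ^ q :=
    (hφ.comp measurable_snd).mul ((hγ.pow_const q).comp measurable_add)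
  have hinner : ∀ y, ∫⁻ x, φ y * γ (x + y) ^ q ∂μ = φ y * ∫⁻ z, γ z ^ q ∂μ := fun y => by
    rw [lintegral_const_mul _ (by fun_prop : Measurable fun x => γ (x + y) ^ q),
      lintegral_add_right_eq_self (fun z => γ z ^ q) y]
  have hpow : A ^ (q - 1) * A = A ^ q := by
    simpa using (ENNReal.rpow_add_of_nonneg (x := A) (q - 1) 1 (sub_nonneg.2 hq) zero_le_one).symm
  calc ∫⁻ x, (∫⁻ y, φ y * γ (x + y) ∂μ) ^ q ∂μ
      ≤ ∫⁻ x, A ^ (q - 1) * ∫⁻ y, φ y * γ (x + y) ^ q ∂μ ∂μ :=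
        lintegral_mono fun x => ENNReal.lintegral_mul_rpow_le hq hφ.aemeasurable
          (hγ.comp (measurable_const_add x)).aemeasurable
    _ = A ^ (q - 1) * ∫⁻ y, ∫⁻ x, φ y * γ (x + y) ^ q ∂μ ∂μ := by
        rw [lintegral_const_mul _ hkernel.lintegral_prod_right',
          lintegral_lintegral_swap hkernel.aemeasurable]
    _ = A ^ q * ∫⁻ z, γ z ^ q ∂μ := by
        simp only [hinner]
        rw [lintegral_mul_const _ hφ, ← mul_assoc, hpow]

theorem eLpNorm_lintegral_mul_comp_add_le {p : ℝ≥0∞} (hp1 : 1 ≤ p) (hp : p ≠ ∞)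
    {φ γ : G → ℝ≥0∞} (hφ : Measurable φ) (hγ : Measurable γ) :
    eLpNorm (fun x => ∫⁻ y, φ y * γ (x + y) ∂μ) p μ ≤ (∫⁻ y, φ y ∂μ) * eLpNorm γ p μ := by
  have hp0 : p ≠ 0 := (one_pos.trans_le hp1).ne'
  have hq1 : 1 ≤ p.toReal := by simpa using ENNReal.toReal_mono hp hp1
  have hq0 : 0 < p.toReal := one_pos.trans_le hq1
  simp only [eLpNorm_eq_lintegral_rpow_enorm_toReal hp0 hp, enorm_eq_self]
  calc (∫⁻ x, (∫⁻ y, φ y * γ (x + y) ∂μ) ^ p.toReal ∂μ) ^ (1 / p.toReal)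
      ≤ ((∫⁻ y, φ y ∂μ) ^ p.toReal * ∫⁻ z, γ z ^ p.toReal ∂μ) ^ (1 / p.toReal) :=
        ENNReal.rpow_le_rpow (lintegral_rpow_lintegral_mul_comp_add_le hq1 hφ hγ) (by positivity)
    _ = (∫⁻ y, φ y ∂μ) * (∫⁻ z, γ z ^ p.toReal ∂μ) ^ (1 / p.toReal) := by
        rw [ENNReal.mul_rpow_of_nonneg _ _ (by positivity), ← ENNReal.rpow_mul,
          mul_one_div_cancel hq0.ne', ENNReal.rpow_one]

end Young

section WeightedCrossCorrelation

variable {d : ℕ} {f g : EuclideanSpace ℝ (Fin d) → ℂ}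
  {w : EuclideanSpace ℝ (Fin d) → EuclideanSpace ℝ (Fin d) → ℂ}

theorem wcc_congr_ae {f' g' : EuclideanSpace ℝ (Fin d) → ℂ} (hf : f =ᵐ[volume] f')
    (hg : g =ᵐ[volume] g') : wcc f g w = wcc f' g' w := by
  funext x
  refine integral_congr_ae ?_
  filter_upwards [hf, (measurePreserving_add_left volume x).quasiMeasurePreserving.ae_eq_comp hg]
    with y hfy hgy
  simp only [Function.comp_apply] at hgy
  rw [hfy, hgy]

theorem wcc_indicator_left {U : Set (EuclideanSpace ℝ (Fin d))} (hwU : ∀ x, ∀ y ∉ U, w x y = 0) :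
    wcc (U.indicator f) g w = wcc f g w := by
  refine funext fun x => integral_congr_ae (ae_of_all _ fun y => ?_)
  dsimp only
  by_cases hy : y ∈ U
  · rw [Set.indicator_of_mem hy]
  · rw [hwU _ _ hy, mul_zero, mul_zero]

theorem stronglyMeasurable_wcc (hf : Measurable f) (hg : Measurable g)
    (hw : Measurable fun q : EuclideanSpace ℝ (Fin d) × EuclideanSpace ℝ (Fin d) => w q.1 q.2) :
    StronglyMeasurable (wcc f g w) := by
  have hkernel : Measurable fun q : EuclideanSpace ℝ (Fin d) × EuclideanSpace ℝ (Fin d) =>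
      (starRingEnd ℂ) (f q.2) * g (q.1 + q.2) * w (q.1 + q.2) q.2 :=
    ((continuous_conj.measurable.comp (hf.comp measurable_snd)).mul (hg.comp measurable_add)).mul
      (hw.comp (measurable_add.prodMk measurable_snd))
  exact hkernel.stronglyMeasurable.integral_prod_right'

theorem enorm_wcc_le {C : ℝ} (hC : ∀ x y, ‖w x y‖ ≤ C) (x : EuclideanSpace ℝ (Fin d)) :
    ‖wcc f g w x‖ₑ ≤ C.toNNReal * ∫⁻ y, ‖f y‖ₑ * ‖g (x + y)‖ₑ := by
  rw [← lintegral_const_mul' _ _ ENNReal.coe_ne_top]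
  refine (enorm_integral_le_lintegral_enorm _).trans (lintegral_mono fun y => ?_)
  have hwC : ‖w (x + y) y‖ₑ ≤ C.toNNReal := by
    rw [← ofReal_norm, ENNReal.ofReal]
    exact ENNReal.coe_le_coe.2 (Real.toNNReal_le_toNNReal (hC _ _))
  calc ‖(starRingEnd ℂ) (f y) * g (x + y) * w (x + y) y‖ₑ
      = ‖f y‖ₑ * ‖g (x + y)‖ₑ * ‖w (x + y) y‖ₑ := by simp only [enorm_mul, RCLike.enorm_conj]
    _ ≤ ‖f y‖ₑ * ‖g (x + y)‖ₑ * C.toNNReal := by gcongr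
    _ = C.toNNReal * (‖f y‖ₑ * ‖g (x + y)‖ₑ) := mul_comm _ _

theorem memLp_wcc_of_integrable {p : ℝ≥0∞} (hp1 : 1 ≤ p) (hp : p ≠ ∞)
    (hw : Measurable fun q : EuclideanSpace ℝ (Fin d) × EuclideanSpace ℝ (Fin d) => w q.1 q.2)
    {C : ℝ} (hC : ∀ x y, ‖w x y‖ ≤ C) (hf : Integrable f) (hg : MemLp g p) :
    MemLp (wcc f g w) p := by
  set f' := hf.1.mk f
  set g' := hg.1.mk g
  have hf' : Integrable f' := hf.congr hf.1.ae_eq_mk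
  have hg' : MemLp g' p := hg.ae_eq hg.1.ae_eq_mk
  have hf'm : Measurable f' := hf.1.stronglyMeasurable_mk.measurable
  have hg'm : Measurable g' := hg.1.stronglyMeasurable_mk.measurable
  have hbound : MemLp (fun x => ∫⁻ y, ‖f' y‖ₑ * ‖g' (x + y)‖ₑ) p := by
    have hkernel : Measurable fun q : EuclideanSpace ℝ (Fin d) × EuclideanSpace ℝ (Fin d) =>
        ‖f' q.2‖ₑ * ‖g' (q.1 + q.2)‖ₑ :=
      (hf'm.enorm.comp measurable_snd).mul (hg'm.enorm.comp measurable_add)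
    refine ⟨hkernel.lintegral_prod_right'.aestronglyMeasurable,
      (eLpNorm_lintegral_mul_comp_add_le hp1 hp hf'm.enorm hg'm.enorm).trans_lt ?_⟩
    rw [eLpNorm_enorm]
    exact ENNReal.mul_lt_top hf'.2 hg'.2
  rw [wcc_congr_ae hf.1.ae_eq_mk hg.1.ae_eq_mk]
  exact hbound.of_enorm_le_mul (stronglyMeasurable_wcc hf'm hg'm hw).aestronglyMeasurable
    (ae_of_all _ fun x => (enorm_wcc_le hC x).trans_eq (by rw [enorm_eq_self]))

end WeightedCrossCorrelation

theorem stmt2 {d : ℕ} (p : ℝ≥0∞) (hp1 : 1 ≤ p) (hp2 : p ≠ ⊤)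
    (U : Set (EuclideanSpace ℝ (Fin d))) (hUb : Bornology.IsBounded U)
    (hUm : MeasurableSet U)
    (w : EuclideanSpace ℝ (Fin d) → EuclideanSpace ℝ (Fin d) → ℂ)
    (hw : Measurable (fun q : EuclideanSpace ℝ (Fin d) × EuclideanSpace ℝ (Fin d) => w q.1 q.2))
    (C : ℝ) (hC : ∀ x y, ‖w x y‖ ≤ C)
    (hwU : ∀ x y, x ∉ U ∨ y ∉ U → w x y = 0)
    (f g : EuclideanSpace ℝ (Fin d) → ℂ)
    (hf : MemLp f p (volume : Measure (EuclideanSpace ℝ (Fin d))))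
    (hg : MemLp g p (volume : Measure (EuclideanSpace ℝ (Fin d)))) :
    MemLp (wcc f g w) p (volume : Measure (EuclideanSpace ℝ (Fin d))) := by
  have : IsFiniteMeasure (volume.restrict U) := isFiniteMeasure_restrict.2 hUb.measure_lt_top.ne
  have hfU : Integrable (U.indicator f) :=
    (integrable_indicator_iff hUm).2 ((hf.restrict U).integrable hp1)
  rw [← wcc_indicator_left fun x y hy => hwU x y (Or.inr hy)]
  exact memLp_wcc_of_integrable hp1 hp2 hw hC hfU hg
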